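/- arXiv:0805.3043 — 7 statements merged into one kernel-verified Lean document; each statement's English description precedes it below -/
import Mathlib

section
/- Let X be a finite set with n elements, let Y be a block design on X with parameters (n, c, k, l), and let f : X → ℝ. For every x ∈ X, the sum of the Radon transform over the blocks containing x satisfies Σ_{y ∈ Y, x ∈ y} f̄(y) = (k − l)·f(x) + l·Σ_{x′ ∈ X} f(x′). -/
open Finset

/-- **Key identity for the discrete Radon transform over a block design.**
For a block design `Y` on `X` with parameters `(n, c, k, l)` and `f : X → ℝ`,
for every `x ∈ X`,
`Σ_{y ∈ Y, x ∈ y} f̄(y) = (k − l)·f(x) + l·Σ_{x′ ∈ X} f(x′)`,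
where `f̄(y) = Σ_{x ∈ y} f(x)` is the Radon transform. -/
theorem radon_transform_sum_over_blocks_containing
    {X : Type*} [Fintype X] [DecidableEq X]
    (Y : Finset (Finset X)) (n c k l : ℕ)
    (hn : Fintype.card X = n)
    (hc : ∀ y ∈ Y, y.card = c)
    (hk : ∀ x : X, (Y.filter (fun y => x ∈ y)).card = k)
    (hl : ∀ x x' : X, x ≠ x' →
      (Y.filter (fun y => x ∈ y ∧ x' ∈ y)).card = l)
    (f : X → ℝ) (x : X) :
    ∑ y ∈ Y.filter (fun y => x ∈ y), (∑ x' ∈ y, f x')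
      = ((k : ℝ) - l) * f x + l * ∑ x' : X, f x' := by
  have step1 : ∑ y ∈ Y.filter (fun y => x ∈ y), (∑ x' ∈ y, f x')
      = ∑ x' : X, ((Y.filter (fun y => x ∈ y ∧ x' ∈ y)).card : ℝ) * f x' := by
    rw [Finset.sum_comm' (s := Y.filter (fun y => x ∈ y)) (t := fun y => y)
      (t' := Finset.univ) (s' := fun x' => Y.filter (fun y => x ∈ y ∧ x' ∈ y))
      (f := fun _ x' => f x')]
    · simp [Finset.sum_const, nsmul_eq_mul]
    · intro y x'
      simp [Finset.mem_filter, and_assoc, and_comm]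
      tauto
  rw [step1]
  have split : ∀ x' : X, ((Y.filter (fun y => x ∈ y ∧ x' ∈ y)).card : ℝ) * f x'
      = (if x' = x then ((k : ℝ) - l) * f x else 0) + (l : ℝ) * f x' := by
    intro x'
    by_cases h : x' = x
    · subst h
      have : (Y.filter (fun y => x' ∈ y ∧ x' ∈ y)) = Y.filter (fun y => x' ∈ y) := by
        simp [and_self]
      rw [this, hk x']
      simp
      ring
    · rw [hl x x' (fun e => h e.symm)]
      simp [h]
  rw [Finset.sum_congr rfl (fun x' _ => split x')]
  rw [Finset.sum_add_distrib, Finset.sum_ite_eq' Finset.univ x, ← Finset.mul_sum]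
  simp
end

section
/- Let X be a finite set with n elements and let Y be a block design on X with parameters (n, c, k, l) and |Y| > 1. Then the Radon transform f ↦ f̄ is one to one on functions f : X → ℝ: if f̄(y) = ḡ(y) for all y ∈ Y, then f = g. -/
open Finset

/-- **Injectivity of the discrete Radon transform over a block design.**
If `Y` is a block design on `X` with parameters `(n, c, k, l)` and `|Y| > 1`,
then the Radon transform `f ↦ f̄`, `f̄(y) = Σ_{x ∈ y} f(x)`, is one to one on
functions `f : X → ℝ`. -/
theorem radon_transform_injective
    {X : Type*} [Fintype X] [DecidableEq X]
    (Y : Finset (Finset X)) (n c k l : ℕ)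
    (hn : Fintype.card X = n)
    (hc : ∀ y ∈ Y, y.card = c)
    (hk : ∀ x : X, (Y.filter (fun y => x ∈ y)).card = k)
    (hl : ∀ x x' : X, x ≠ x' →
      (Y.filter (fun y => x ∈ y ∧ x' ∈ y)).card = l)
    (hY : 1 < Y.card)
    (f g : X → ℝ)
    (h : ∀ y ∈ Y, ∑ x ∈ y, f x = ∑ x ∈ y, g x) :
    f = g := by
  classical
  rcases isEmpty_or_nonempty X with hX | hX
  · funext x; exact (IsEmpty.false x).elim
  obtain ⟨x0⟩ := hX
  -- k > 0
  have hk0 : 0 < k := by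
    by_contra hk0
    push_neg at hk0
    interval_cases k
    -- every block is empty
    have hemp : ∀ y ∈ Y, y = ∅ := by
      intro y hy
      by_contra hne
      obtain ⟨z, hz⟩ := Finset.nonempty_of_ne_empty hne
      have hmem : y ∈ Y.filter (fun y => z ∈ y) := Finset.mem_filter.2 ⟨hy, hz⟩
      have hpos := Finset.card_pos.2 ⟨y, hmem⟩
      rw [hk z] at hpos
      omega
    have hsub : Y ⊆ {∅} := fun y hy => by simp [hemp y hy]
    have := Finset.card_le_card hsub
    simp at this; omega
  -- k ≠ l
  have hkl : k ≠ l := by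
    intro hkl
    -- every block containing x0 is univ
    have huniv : ∀ y ∈ Y, x0 ∈ y → y = Finset.univ := by
      intro y hy hx0
      apply Finset.eq_univ_of_forall
      intro x'
      by_cases hxx : x' = x0
      · rwa [hxx]
      have hsub : Y.filter (fun y => x0 ∈ y ∧ x' ∈ y) ⊆ Y.filter (fun y => x0 ∈ y) := by
        intro z hz
        simp only [Finset.mem_filter] at hz ⊢
        exact ⟨hz.1, hz.2.1⟩
      have hcard : (Y.filter (fun y => x0 ∈ y)).card ≤
          (Y.filter (fun y => x0 ∈ y ∧ x' ∈ y)).card := by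
        rw [hk x0, hl x0 x' (fun e => hxx e.symm)]; omega
      have heq := Finset.eq_of_subset_of_card_le hsub hcard
      have : y ∈ Y.filter (fun y => x0 ∈ y ∧ x' ∈ y) := by
        rw [heq]; exact Finset.mem_filter.2 ⟨hy, hx0⟩
      exact (Finset.mem_filter.1 this).2.2
    -- so the filter at x0 is a subset of {univ}, hence k ≤ 1, so k = 1
    have hsub : Y.filter (fun y => x0 ∈ y) ⊆ {Finset.univ} := by
      intro y hy
      rw [Finset.mem_singleton]
      exact huniv y (Finset.mem_filter.1 hy).1 (Finset.mem_filter.1 hy).2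
    have hk1 : k = 1 := by
      have := Finset.card_le_card hsub
      rw [hk x0] at this
      simp at this; omega
    have huY : Finset.univ ∈ Y := by
      have : (Y.filter (fun y => x0 ∈ y)).Nonempty := by
        rw [← Finset.card_pos, hk x0]; omega
      obtain ⟨y, hy⟩ := this
      have := hsub hy
      rw [Finset.mem_singleton] at this
      rw [← this]
      exact (Finset.mem_filter.1 hy).1
    -- every other block is empty
    have hemp : ∀ y ∈ Y, y ≠ Finset.univ → y = ∅ := by
      intro y hy hne
      by_contra hne'
      obtain ⟨z, hz⟩ := Finset.nonempty_of_ne_empty hne'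
      have h1 : y ∈ Y.filter (fun y => z ∈ y) := Finset.mem_filter.2 ⟨hy, hz⟩
      have h2 : Finset.univ ∈ Y.filter (fun y => z ∈ y) :=
        Finset.mem_filter.2 ⟨huY, Finset.mem_univ z⟩
      have : 1 < (Y.filter (fun y => z ∈ y)).card :=
        Finset.one_lt_card.2 ⟨y, h1, Finset.univ, h2, hne⟩
      rw [hk z, hk1] at this; omega
    -- so Y ⊆ {univ, ∅}; since |Y| > 1, ∅ ∈ Y, contradicting c = card univ > 0
    have hYsub : Y ⊆ {Finset.univ, (∅ : Finset X)} := by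
      intro y hy
      by_cases hne : y = Finset.univ
      · simp [hne]
      · simp [hemp y hy hne]
    have hempY : (∅ : Finset X) ∈ Y := by
      by_contra hno
      have : Y ⊆ {Finset.univ} := by
        intro y hy
        have := hYsub hy
        simp at this
        rcases this with h1 | h1
        · simp [h1]
        · exact absurd (h1 ▸ hy) hno
      have := Finset.card_le_card this
      simp at this; omega
    have hc1 := hc ∅ hempY
    have hc2 := hc Finset.univ huY
    simp at hc1
    rw [Finset.card_univ] at hc2
    have : Fintype.card X = 0 := by omega
    have hpos : 0 < Fintype.card X := Fintype.card_pos_iff.2 ⟨x0⟩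
    omega
  -- now the analytic part
  set d : X → ℝ := fun x => f x - g x with hdef
  have hd0 : ∀ y ∈ Y, ∑ x ∈ y, d x = 0 := by
    intro y hy
    simp [hdef, Finset.sum_sub_distrib, h y hy]
  have e : ∀ (y : Finset X) (F : X → ℝ), ∑ x ∈ y, F x = ∑ x : X, if x ∈ y then F x else 0 := by
    intro y F
    rw [Finset.sum_ite_mem, Finset.univ_inter]
  -- first moment: ∑ x, d x = 0
  have hT : ∑ x : X, d x = 0 := by
    have h1 : ∑ y ∈ Y, ∑ x ∈ y, d x = 0 := Finset.sum_eq_zero hd0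
    have h2 : ∑ y ∈ Y, ∑ x ∈ y, d x = (k : ℝ) * ∑ x : X, d x := by
      calc ∑ y ∈ Y, ∑ x ∈ y, d x
          = ∑ y ∈ Y, ∑ x : X, if x ∈ y then d x else 0 :=
            Finset.sum_congr rfl fun y _ => e y d
        _ = ∑ x : X, ∑ y ∈ Y, if x ∈ y then d x else 0 := Finset.sum_comm
        _ = ∑ x : X, (k : ℝ) * d x := by
            refine Finset.sum_congr rfl fun x _ => ?_
            rw [← Finset.sum_filter, Finset.sum_const, hk x, nsmul_eq_mul]
        _ = (k : ℝ) * ∑ x : X, d x := by rw [Finset.mul_sum]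
    rw [h1] at h2
    have hkne : (k : ℝ) ≠ 0 := Nat.cast_ne_zero.2 hk0.ne'
    exact (mul_eq_zero.1 h2.symm).resolve_left hkne
  -- second moment
  have hQ : ∑ x : X, (d x) ^ 2 = 0 := by
    have h1 : ∑ y ∈ Y, (∑ x ∈ y, d x) ^ 2 = 0 :=
      Finset.sum_eq_zero fun y hy => by rw [hd0 y hy]; ring
    have h2 : ∑ y ∈ Y, (∑ x ∈ y, d x) ^ 2
        = ∑ x : X, ∑ x' : X,
            ((Y.filter (fun y => x ∈ y ∧ x' ∈ y)).card : ℝ) * (d x * d x') := by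
      calc ∑ y ∈ Y, (∑ x ∈ y, d x) ^ 2
          = ∑ y ∈ Y, ∑ x : X, ∑ x' : X, if x ∈ y ∧ x' ∈ y then d x * d x' else 0 := by
            refine Finset.sum_congr rfl fun y _ => ?_
            rw [sq, Finset.sum_mul_sum, e y (fun x => ∑ x' ∈ y, d x * d x')]
            refine Finset.sum_congr rfl fun x _ => ?_
            rw [e y (fun x' => d x * d x')]
            by_cases hx : x ∈ y <;> simp [hx]
        _ = ∑ x : X, ∑ y ∈ Y, ∑ x' : X, if x ∈ y ∧ x' ∈ y then d x * d x' else 0 :=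
            Finset.sum_comm
        _ = ∑ x : X, ∑ x' : X, ∑ y ∈ Y, if x ∈ y ∧ x' ∈ y then d x * d x' else 0 :=
            Finset.sum_congr rfl fun x _ => Finset.sum_comm
        _ = ∑ x : X, ∑ x' : X,
              ((Y.filter (fun y => x ∈ y ∧ x' ∈ y)).card : ℝ) * (d x * d x') := by
            refine Finset.sum_congr rfl fun x _ => Finset.sum_congr rfl fun x' _ => ?_
            rw [← Finset.sum_filter, Finset.sum_const, nsmul_eq_mul]
    -- split the diagonal
    have h3 : ∑ x : X, ∑ x' : X,
        ((Y.filter (fun y => x ∈ y ∧ x' ∈ y)).card : ℝ) * (d x * d x')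
        = (k : ℝ) * ∑ x : X, (d x) ^ 2 - (l : ℝ) * ∑ x : X, (d x) ^ 2 := by
      have hsplit : ∀ x : X, ∑ x' : X,
          ((Y.filter (fun y => x ∈ y ∧ x' ∈ y)).card : ℝ) * (d x * d x')
          = (k : ℝ) * (d x) ^ 2 - (l : ℝ) * (d x) ^ 2 := by
        intro x
        rw [← Finset.add_sum_erase Finset.univ _ (Finset.mem_univ x)]
        have hdiag : ((Y.filter (fun y => x ∈ y ∧ x ∈ y)).card : ℝ) * (d x * d x)
            = (k : ℝ) * (d x) ^ 2 := by
          have : (Y.filter (fun y => x ∈ y ∧ x ∈ y)) = Y.filter (fun y => x ∈ y) := by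
            apply Finset.filter_congr; intro y _; simp
          rw [this, hk x]; ring
        rw [hdiag]
        have hoff : ∑ x' ∈ Finset.univ.erase x,
            ((Y.filter (fun y => x ∈ y ∧ x' ∈ y)).card : ℝ) * (d x * d x')
            = (l : ℝ) * (d x * ∑ x' ∈ Finset.univ.erase x, d x') := by
          rw [Finset.mul_sum, Finset.mul_sum]
          refine Finset.sum_congr rfl fun x' hx' => ?_
          have hne : x ≠ x' := fun e => (Finset.mem_erase.1 hx').1 e.symm
          simp [hl x x' hne]
        rw [hoff]
        have : ∑ x' ∈ Finset.univ.erase x, d x' = - d x := by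
          have := Finset.add_sum_erase Finset.univ d (Finset.mem_univ x)
          rw [hT] at this
          linarith
        rw [this]; ring
      rw [Finset.sum_congr rfl fun x _ => hsplit x, Finset.sum_sub_distrib,
        ← Finset.mul_sum, ← Finset.mul_sum]
    rw [h1] at h2
    rw [h3] at h2
    have hklR : (k : ℝ) ≠ (l : ℝ) := fun e => hkl (Nat.cast_injective e)
    have : ((k : ℝ) - l) * ∑ x : X, (d x) ^ 2 = 0 := by linarith
    rcases mul_eq_zero.1 this with h' | h'
    · exact absurd (by linarith : (k : ℝ) = l) hklR
    · exact h'
  -- conclude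
  funext x
  have hx : (d x) ^ 2 = 0 := by
    have hnn : ∀ x ∈ Finset.univ, (0:ℝ) ≤ (d x) ^ 2 := fun x _ => sq_nonneg _
    exact (Finset.sum_eq_zero_iff_of_nonneg hnn).1 hQ x (Finset.mem_univ x)
  have : d x = 0 := by
    have := sq_eq_zero_iff.1 hx
    exact this
  have : f x - g x = 0 := this
  linarith
end

section
/- Let X be a finite set with n elements, let Y be a block design on X with parameters (n, c, k, l) and |Y| > 1, and let f : X → ℝ. Then f is given explicitly in terms of its Radon transform by the inversion formula f(x) = (1/(k−l)) · Σ_{y ∈ Y, x ∈ y} f̄(y) − (l·c / ((k−l)² + n·l·(k−l))) · Σ_{y ∈ Y} f̄(y). -/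
open Finset

/-- **Explicit inversion formula for the discrete Radon transform.**
If `Y` is a block design on `X` with parameters `(n, c, k, l)` and `|Y| > 1`,
then every `f : X → ℝ` is recovered from its Radon transform by
`f(x) = (1/(k−l)) Σ_{y ∈ Y, x ∈ y} f̄(y)
        − (l·c / ((k−l)² + n·l·(k−l))) Σ_{y ∈ Y} f̄(y)`. -/
theorem radon_transform_inversion_formula
    {X : Type*} [Fintype X] [DecidableEq X]
    (Y : Finset (Finset X)) (n c k l : ℕ)
    (hn : Fintype.card X = n)
    (hc : ∀ y ∈ Y, y.card = c)
    (hk : ∀ x : X, (Y.filter (fun y => x ∈ y)).card = k)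
    (hl : ∀ x x' : X, x ≠ x' →
      (Y.filter (fun y => x ∈ y ∧ x' ∈ y)).card = l)
    (hY : 1 < Y.card)
    (f : X → ℝ) (x : X) :
    f x = (1 / ((k : ℝ) - l)) * (∑ y ∈ Y.filter (fun y => x ∈ y), ∑ x' ∈ y, f x')
        - ((l : ℝ) * c / (((k : ℝ) - l) ^ 2 + n * l * ((k : ℝ) - l)))
            * ∑ y ∈ Y, (∑ x' ∈ y, f x') := by
  classical
  -- swap double sums
  have hswap : ∀ (Z : Finset (Finset X)) (g : X → ℝ),
      ∑ y ∈ Z, ∑ x' ∈ y, g x'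
        = ∑ x' : X, ((Z.filter (fun y => x' ∈ y)).card : ℝ) * g x' := by
    intro Z g
    have h1 : ∀ y ∈ Z, ∑ x' ∈ y, g x' = ∑ x' : X, if x' ∈ y then g x' else 0 := by
      intro y _
      rw [Finset.sum_ite_mem, Finset.univ_inter]
    rw [Finset.sum_congr rfl h1, Finset.sum_comm]
    refine Finset.sum_congr rfl fun x' _ => ?_
    rw [← Finset.sum_filter, Finset.sum_const, nsmul_eq_mul]
  -- Lemma A : total sum
  have keyA : ∀ g : X → ℝ,
      ∑ y ∈ Y, ∑ x' ∈ y, g x' = (k : ℝ) * ∑ x' : X, g x' := by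
    intro g
    rw [hswap, Finset.mul_sum]
    refine Finset.sum_congr rfl fun x' _ => ?_
    rw [hk x']
  -- Lemma B : sum over blocks through x
  have keyB : ∀ g : X → ℝ,
      ∑ y ∈ Y.filter (fun y => x ∈ y), ∑ x' ∈ y, g x'
        = (k : ℝ) * g x + (l : ℝ) * ((∑ x' : X, g x') - g x) := by
    intro g
    rw [hswap]
    have hcard : ∀ x' : X,
        (((Y.filter (fun y => x ∈ y)).filter (fun y => x' ∈ y)).card : ℝ) =
          if x' = x then (k : ℝ) else (l : ℝ) := by
      intro x'
      rw [Finset.filter_filter]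
      by_cases h : x' = x
      · subst h
        rw [if_pos rfl]
        have hfe : Y.filter (fun y => x' ∈ y ∧ x' ∈ y) = Y.filter (fun y => x' ∈ y) := by
          apply Finset.filter_congr
          intro y _
          simp
        rw [hfe, hk x']
      · rw [if_neg h, hl x x' (fun he => h he.symm)]
    rw [Finset.sum_congr rfl (fun x' _ => by rw [hcard x'])]
    have hsplit : ∀ x' : X, (if x' = x then (k : ℝ) else (l : ℝ)) * g x'
        = (l : ℝ) * g x' + (if x' = x then ((k : ℝ) - l) * g x' else 0) := by
      intro x'
      subst_vars
      by_cases h : x' = x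
      · subst h
        rw [if_pos rfl, if_pos rfl]
        ring
      · rw [if_neg h, if_neg h]
        ring
    rw [Finset.sum_congr rfl (fun x' _ => hsplit x'), Finset.sum_add_distrib,
      Finset.sum_ite_eq' Finset.univ x, if_pos (Finset.mem_univ x), ← Finset.mul_sum]
    ring
  -- counting identities with g ≡ 1
  have hA1 : (Y.card : ℝ) * c = (k : ℝ) * n := by
    have := keyA (fun _ => (1 : ℝ))
    simp only [Finset.sum_const, nsmul_eq_mul, mul_one, Finset.card_univ, hn] at this
    rw [← this]
    rw [Finset.sum_congr rfl (fun y hy => by rw [hc y hy])]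
    rw [Finset.sum_const, nsmul_eq_mul]
  have hB1 : (k : ℝ) * c = ((k : ℝ) - l) + (n : ℝ) * l := by
    have h := keyB (fun _ => (1 : ℝ))
    simp only [Finset.sum_const, nsmul_eq_mul, mul_one, Finset.card_univ, hn] at h
    have hleft : ∑ y ∈ Y.filter (fun y => x ∈ y), ((y.card : ℕ) : ℝ) = (k : ℝ) * c := by
      rw [Finset.sum_congr rfl (fun y hy => by
        rw [hc y (Finset.mem_of_mem_filter y hy)]),
        Finset.sum_const, nsmul_eq_mul, hk x]
    rw [hleft] at h
    rw [h]; ring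
  -- c ≠ 0
  have hc0 : c ≠ 0 := by
    intro h
    subst h
    have hsub : Y ⊆ {∅} := by
      intro y hy
      rw [Finset.mem_singleton, ← Finset.card_eq_zero]
      exact hc y hy
    have := Finset.card_le_card hsub
    simp at this
    omega
  -- k ≠ 0
  have hk0 : k ≠ 0 := by
    intro h
    subst h
    rw [Nat.cast_zero, zero_mul] at hA1
    have hYne : (Y.card : ℝ) ≠ 0 := by positivity
    have hcz : (c : ℝ) = 0 := by
      rcases mul_eq_zero.mp hA1 with h | h
      · exact absurd h hYne
      · exact h
    exact hc0 (by exact_mod_cast hcz)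
  -- k ≠ l
  have hkl : k ≠ l := by
    intro h
    subst h
    have hk' : (k : ℝ) ≠ 0 := Nat.cast_ne_zero.mpr hk0
    have hcn : (c : ℝ) = n := by
      have h2 : (k : ℝ) * (c - n) = 0 := by linarith [hB1]
      rcases mul_eq_zero.mp h2 with h | h
      · exact absurd h hk'
      · linarith
    have hcn' : c = n := by exact_mod_cast hcn
    have hsub : Y ⊆ {Finset.univ} := by
      intro y hy
      rw [Finset.mem_singleton]
      apply Finset.eq_univ_of_card
      rw [hc y hy, hcn', hn]
    have := Finset.card_le_card hsub
    simp at this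
    omega
  -- denominators
  have hd : (k : ℝ) - l ≠ 0 := by
    intro h
    apply hkl
    exact_mod_cast sub_eq_zero.mp h
  have hden' : ((k : ℝ) - l) ^ 2 + (n : ℝ) * l * ((k : ℝ) - l)
      = ((k : ℝ) - l) * ((k : ℝ) * c) := by
    rw [hB1]; ring
  have hkR : (k : ℝ) ≠ 0 := Nat.cast_ne_zero.mpr hk0
  have hcR : (c : ℝ) ≠ 0 := Nat.cast_ne_zero.mpr hc0
  -- finish
  rw [keyA f, keyB f, hden']
  field_simp
  ring
end

section
/- Let X be a finite set with n elements, let Y be a block design on X with parameters (n, c, k, l), let f : X → ℝ, and set μ(f) = Σ_{x ∈ X} f(x). If y is chosen uniformly at random from Y, then the variance of the Radon transform is var(f̄(y)) = (c/n)·(1 − (c−1)/(n−1)) · Σ_{x ∈ X} (f(x) − μ(f)/n)². -/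
open Finset


lemma helper_sum {X : Type*} [Fintype X] [DecidableEq X]
    (Y : Finset (Finset X)) (k : ℕ)
    (hk : ∀ x : X, (Y.filter (fun y => x ∈ y)).card = k)
    (g : X → ℝ) :
    ∑ y ∈ Y, ∑ x ∈ y, g x = (k : ℝ) * ∑ x : X, g x := by
  have h1 : ∀ y ∈ Y, ∑ x ∈ y, g x = ∑ x : X, if x ∈ y then g x else 0 := by
    intro y _
    rw [Finset.sum_ite_mem]
    simp
  rw [Finset.sum_congr rfl h1, Finset.sum_comm]
  rw [Finset.mul_sum]
  refine Finset.sum_congr rfl fun x _ => ?_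
  rw [Finset.sum_ite, Finset.sum_const, Finset.sum_const_zero, add_zero, hk]
  simp [mul_comm]

lemma helper_sq {X : Type*} [Fintype X] [DecidableEq X]
    (Y : Finset (Finset X)) (k l : ℕ)
    (hk : ∀ x : X, (Y.filter (fun y => x ∈ y)).card = k)
    (hl : ∀ x x' : X, x ≠ x' →
      (Y.filter (fun y => x ∈ y ∧ x' ∈ y)).card = l)
    (g : X → ℝ) :
    ∑ y ∈ Y, (∑ x ∈ y, g x) ^ 2
      = (k : ℝ) * ∑ x : X, (g x) ^ 2
        + (l : ℝ) * ((∑ x : X, g x) ^ 2 - ∑ x : X, (g x) ^ 2) := by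
  have h1 : ∀ y ∈ Y, (∑ x ∈ y, g x) ^ 2
      = ∑ x : X, ∑ x' : X, if x ∈ y ∧ x' ∈ y then g x * g x' else 0 := by
    intro y _
    rw [sq, Finset.sum_mul_sum]
    have : ∀ x : X, ∑ x' ∈ y, g x * g x'
        = ∑ x' : X, if x' ∈ y then g x * g x' else 0 := by
      intro x; rw [Finset.sum_ite_mem]; simp
    rw [show (∑ x ∈ y, ∑ x' ∈ y, g x * g x')
        = ∑ x ∈ y, ∑ x' : X, if x' ∈ y then g x * g x' else 0 from
      Finset.sum_congr rfl fun x _ => this x]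
    rw [show (∑ x ∈ y, ∑ x' : X, if x' ∈ y then g x * g x' else 0)
        = ∑ x : X, if x ∈ y then ∑ x' : X, (if x' ∈ y then g x * g x' else 0) else 0 by
      rw [Finset.sum_ite_mem]; simp]
    refine Finset.sum_congr rfl fun x _ => ?_
    split_ifs with hx
    · refine Finset.sum_congr rfl fun x' _ => ?_
      simp [hx]
    · simp [hx]
  rw [Finset.sum_congr rfl h1, Finset.sum_comm]
  have h2 : ∀ x : X, ∑ y ∈ Y, ∑ x' : X, (if x ∈ y ∧ x' ∈ y then g x * g x' else 0)
      = ∑ x' : X, ((Y.filter (fun y => x ∈ y ∧ x' ∈ y)).card : ℝ) * (g x * g x') := by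
    intro x
    rw [Finset.sum_comm]
    refine Finset.sum_congr rfl fun x' _ => ?_
    rw [Finset.sum_ite, Finset.sum_const, Finset.sum_const_zero, add_zero]
    simp [mul_comm]
  rw [Finset.sum_congr rfl fun x _ => h2 x]
  have h3 : ∀ x : X, ∑ x' : X, ((Y.filter (fun y => x ∈ y ∧ x' ∈ y)).card : ℝ) * (g x * g x')
      = (k : ℝ) * (g x)^2 + (l : ℝ) * (g x * ((∑ x' : X, g x') - g x)) := by
    intro x
    rw [← Finset.sum_erase_add _ _ (Finset.mem_univ x)]
    have hdiag : (Y.filter (fun y => x ∈ y ∧ x ∈ y)).card = k := by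
      rw [← hk x]
      congr 1
      ext y
      simp
    have hoff : ∀ x' ∈ Finset.univ.erase x,
        ((Y.filter (fun y => x ∈ y ∧ x' ∈ y)).card : ℝ) * (g x * g x')
        = (l : ℝ) * (g x * g x') := by
      intro x' hx'
      rw [hl x x' (Ne.symm (Finset.ne_of_mem_erase hx'))]
    rw [Finset.sum_congr rfl hoff, hdiag, ← Finset.mul_sum, ← Finset.mul_sum]
    rw [Finset.sum_erase_eq_sub (Finset.mem_univ x)]
    ring
  rw [Finset.sum_congr rfl fun x _ => h3 x]
  rw [Finset.sum_add_distrib, ← Finset.mul_sum, ← Finset.mul_sum]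
  have : ∑ x : X, g x * ((∑ x' : X, g x') - g x)
      = (∑ x : X, g x)^2 - ∑ x : X, (g x)^2 := by
    rw [sq, Finset.sum_mul, ← Finset.sum_sub_distrib]
    exact Finset.sum_congr rfl fun x _ => by ring
  rw [this]

/-- **Variance of the Radon transform over a uniformly chosen block.**
For a block design `Y` on `X` with parameters `(n, c, k, l)`, `n ≥ 2`, and
`f : X → ℝ` with total mass `μ(f) = Σ_{x ∈ X} f(x)`, if `y` is chosen uniformly
in `Y` then
`var(f̄(y)) = (c/n)·(1 − (c−1)/(n−1)) · Σ_{x ∈ X} (f(x) − μ(f)/n)²`. -/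
theorem radon_transform_variance
    {X : Type*} [Fintype X] [DecidableEq X]
    (Y : Finset (Finset X)) (n c k l : ℕ)
    (hn : Fintype.card X = n) (hn2 : 2 ≤ n)
    (hc : ∀ y ∈ Y, y.card = c)
    (hk : ∀ x : X, (Y.filter (fun y => x ∈ y)).card = k)
    (hl : ∀ x x' : X, x ≠ x' →
      (Y.filter (fun y => x ∈ y ∧ x' ∈ y)).card = l)
    (hY : Y.Nonempty)
    (f : X → ℝ) :
    (1 / (Y.card : ℝ)) *
        ∑ y ∈ Y, ((∑ x ∈ y, f x) - ((c : ℝ) / n) * ∑ x : X, f x) ^ 2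
      = ((c : ℝ) / n) * (1 - ((c : ℝ) - 1) / ((n : ℝ) - 1)) *
          ∑ x : X, (f x - (∑ x' : X, f x') / n) ^ 2 := by
  have hn0 : (n : ℝ) ≠ 0 := by
    have : 0 < n := by omega
    exact_mod_cast this.ne'
  have hn1 : (n : ℝ) - 1 ≠ 0 := by
    have : (2 : ℝ) ≤ n := by exact_mod_cast hn2
    linarith
  have hm0 : (Y.card : ℝ) ≠ 0 := by
    have : 0 < Y.card := Finset.card_pos.mpr hY
    exact_mod_cast this.ne'
  have huniv : ∑ _x : X, (1 : ℝ) = n := by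
    rw [Finset.sum_const, Finset.card_univ, hn, nsmul_eq_mul, mul_one]
  -- counting identity 1 : m * c = k * n
  have hcount1 : (Y.card : ℝ) * c = (k : ℝ) * n := by
    have h := helper_sum Y k hk (fun _ => (1 : ℝ))
    rw [huniv] at h
    rw [← h]
    have : ∀ y ∈ Y, (∑ _x ∈ y, (1:ℝ)) = (c : ℝ) := by
      intro y hy
      rw [Finset.sum_const, hc y hy, nsmul_eq_mul, mul_one]
    rw [Finset.sum_congr rfl this, Finset.sum_const, nsmul_eq_mul]
  -- counting identity 2 : m * c^2 = k * n + l * (n^2 - n)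
  have hcount2 : (Y.card : ℝ) * c ^ 2
      = (k : ℝ) * n + (l : ℝ) * ((n:ℝ) ^ 2 - n) := by
    have h := helper_sq Y k l hk hl (fun _ => (1 : ℝ))
    simp only [one_pow] at h
    rw [huniv] at h
    rw [← h]
    have : ∀ y ∈ Y, (∑ _x ∈ y, (1:ℝ)) ^ 2 = (c : ℝ) ^ 2 := by
      intro y hy
      rw [Finset.sum_const, hc y hy, nsmul_eq_mul, mul_one]
    rw [Finset.sum_congr rfl this, Finset.sum_const, nsmul_eq_mul]
  have hkr : (k : ℝ) = (Y.card : ℝ) * c / n := by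
    field_simp
    linarith [hcount1]
  have hlr : (l : ℝ) = (Y.card : ℝ) * c * ((c:ℝ) - 1) / (n * ((n:ℝ) - 1)) := by
    rw [eq_div_iff (by exact mul_ne_zero hn0 hn1)]
    nlinarith [hcount1, hcount2]
  -- expand LHS
  have hLsum : ∑ y ∈ Y, ((∑ x ∈ y, f x) - ((c : ℝ) / n) * ∑ x : X, f x) ^ 2
      = (∑ y ∈ Y, (∑ x ∈ y, f x) ^ 2)
        - 2 * (((c : ℝ) / n) * ∑ x : X, f x) * (∑ y ∈ Y, ∑ x ∈ y, f x)
        + (Y.card : ℝ) * (((c : ℝ) / n) * ∑ x : X, f x) ^ 2 := by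
    rw [show (∑ y ∈ Y, ((∑ x ∈ y, f x) - ((c : ℝ) / n) * ∑ x : X, f x) ^ 2)
        = ∑ y ∈ Y, ((∑ x ∈ y, f x) ^ 2
            - 2 * (((c : ℝ) / n) * ∑ x : X, f x) * (∑ x ∈ y, f x)
            + (((c : ℝ) / n) * ∑ x : X, f x) ^ 2) from
      Finset.sum_congr rfl fun y _ => by ring]
    rw [Finset.sum_add_distrib, Finset.sum_sub_distrib, ← Finset.mul_sum,
      Finset.sum_const, nsmul_eq_mul]
  have hRsum : ∑ x : X, (f x - (∑ x' : X, f x') / n) ^ 2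
      = (∑ x : X, (f x) ^ 2) - (∑ x : X, f x) ^ 2 / n := by
    rw [show (∑ x : X, (f x - (∑ x' : X, f x') / n) ^ 2)
        = ∑ x : X, ((f x) ^ 2 - 2 * ((∑ x' : X, f x') / n) * f x
            + ((∑ x' : X, f x') / n) ^ 2) from
      Finset.sum_congr rfl fun x _ => by ring]
    rw [Finset.sum_add_distrib, Finset.sum_sub_distrib, ← Finset.mul_sum,
      Finset.sum_const, Finset.card_univ, hn, nsmul_eq_mul]
    field_simp
    ring
  rw [hLsum, hRsum, helper_sq Y k l hk hl f, helper_sum Y k hk f, hkr, hlr]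
  field_simp
  ring
end

section
/- Let X be a finite set with n elements and let Y be a block design on X with parameters (n, c, k, l) which is also a projection base, i.e. Y is partitioned into classes p_1, …, p_j, each of which is a partition of X into blocks of Y. Let f be a probability on X. If the partition p is chosen uniformly at random from p_1, …, p_j, then for every ε > 0, the event Σ_{y ∈ p} |f̄(y) − c/n| ≤ ε holds with probability at least 1 − (1/ε)·( (n·(n−c)/(c·(n−1))) · Σ_{x ∈ X} (f(x) − 1/n)² )^{1/2}. -/
open Finset

/-! Since the classes partition `Y`, the deviations `Σ_{y ∈ p} |f̄ y - c/n|` summed over all `j`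
classes give `Σ_{y ∈ Y} |f̄ y - c/n| ≤ √(|Y| Σ_y (f̄ y - c/n)²)` by Cauchy–Schwarz. Expanding the
square and counting pairs of points in common blocks gives
`Σ_y (f̄ y - c/n)² = (k - l) Σ_x (f x - 1/n)²`, and the design identities `c |Y| = n k`,
`k (c - 1) = l (n - 1)` and `j = k` turn `|Y| (k - l)` into `j² n (n - c) / (c (n - 1))`. So the
mean deviation over the classes is at most the square root in the bound, and Markov's inequality
concludes. -/

theorem Finset.sum_sum_eq_sum_card_filter_nsmul {ι α M : Type*} [DecidableEq α]
    [AddCommMonoid M] (s : Finset ι) (φ : ι → Finset α) {t : Finset α} (ht : ∀ i ∈ s, φ i ⊆ t)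
    (h : α → M) :
    ∑ i ∈ s, ∑ a ∈ φ i, h a = ∑ a ∈ t, #{i ∈ s | a ∈ φ i} • h a := by
  rw [sum_comm' (t' := t) (s' := fun a => {i ∈ s | a ∈ φ i})]
  · simp only [sum_const]
  · intro i a
    simp only [mem_filter]
    exact ⟨fun hia => ⟨⟨hia.1, hia.2⟩, ht i hia.1 hia.2⟩, fun hia => hia.1⟩

theorem Finset.card_filter_eq_one_of_existsUnique {α : Type*} {s : Finset α} {q : α → Prop}
    [DecidablePred q] (h : ∃! a, a ∈ s ∧ q a) : #{a ∈ s | q a} = 1 :=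
  card_eq_one_iff_existsUnique.2 (by simpa only [mem_filter] using h)

theorem Finset.sum_sum_eq_sum_of_existsUnique_mem {β M : Type*} [DecidableEq β]
    [AddCommMonoid M] {Y : Finset β} {parts : Finset (Finset β)}
    (hsub : ∀ p ∈ parts, ∀ y ∈ p, y ∈ Y)
    (hYpart : ∀ y ∈ Y, ∃! p, p ∈ parts ∧ y ∈ p) (F : β → M) :
    ∑ p ∈ parts, ∑ y ∈ p, F y = ∑ y ∈ Y, F y := by
  refine (sum_sum_eq_sum_card_filter_nsmul parts (fun p => p) (fun p hp y hy => hsub p hp y hy)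
    F).trans (sum_congr rfl fun y hy => ?_)
  rw [card_filter_eq_one_of_existsUnique (hYpart y hy), one_nsmul]

theorem Real.sum_abs_le_sqrt_card_mul_sum_sq {ι : Type*} (s : Finset ι) (a : ι → ℝ) :
    ∑ i ∈ s, |a i| ≤ √(#s * ∑ i ∈ s, a i ^ 2) :=
  Real.le_sqrt_of_sq_le <| by
    simpa only [sq_abs] using sq_sum_le_card_mul_sum_sq (s := s) (f := fun i => |a i|)

theorem Finset.one_sub_sum_div_card_div_le_card_filter_le_div {ι : Type*} {s : Finset ι}
    (hs : s.Nonempty) {S : ι → ℝ} (hS : ∀ i ∈ s, 0 ≤ S i) {ε : ℝ} (hε : 0 < ε) :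
    1 - (∑ i ∈ s, S i) / #s / ε ≤ #{i ∈ s | S i ≤ ε} / #s := by
  have hmarkov : ε * #{i ∈ s | ¬ S i ≤ ε} ≤ ∑ i ∈ s, S i :=
    calc ε * #{i ∈ s | ¬ S i ≤ ε} = ∑ i ∈ s with ¬ S i ≤ ε, ε := by
          rw [sum_const, nsmul_eq_mul, mul_comm]
      _ ≤ ∑ i ∈ s with ¬ S i ≤ ε, S i :=
          sum_le_sum fun i hi => (not_le.1 (mem_filter.1 hi).2).le
      _ ≤ ∑ i ∈ s, S i :=
          sum_le_sum_of_subset_of_nonneg (filter_subset _ _) fun i hi _ => hS i hi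
  have hsplit : (#{i ∈ s | S i ≤ ε} : ℝ) + #{i ∈ s | ¬ S i ≤ ε} = #s := by
    exact_mod_cast card_filter_add_card_filter_not _
  have hs' : (0 : ℝ) < #s := by exact_mod_cast hs.card_pos
  have hbad : (#{i ∈ s | ¬ S i ≤ ε} : ℝ) ≤ (∑ i ∈ s, S i) / ε := by
    rw [le_div_iff₀ hε]
    linarith
  rw [div_right_comm, one_sub_div hs'.ne']
  exact div_le_div_of_nonneg_right (by linarith) hs'.le

section BlockDesign

variable {X : Type*} [Fintype X] [DecidableEq X] {Y : Finset (Finset X)} {c k l : ℕ}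

theorem sum_sq_sum_block_eq {R : Type*} [CommRing R] (hk : ∀ x : X, #{y ∈ Y | x ∈ y} = k)
    (hl : ∀ x x' : X, x ≠ x' → #{y ∈ Y | x ∈ y ∧ x' ∈ y} = l) (g : X → R) :
    ∑ y ∈ Y, (∑ x ∈ y, g x) ^ 2 = (k - l) * ∑ x, g x ^ 2 + l * (∑ x, g x) ^ 2 := by
  have hcount : ∀ z : X × X, #{y ∈ Y | z ∈ y ×ˢ y} = if z.1 = z.2 then k else l := by
    rintro ⟨x, x'⟩
    simp only [mem_product]
    split_ifs with hxx'
    · subst hxx'; simpa only [and_self] using hk x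
    · exact hl x x' hxx'
  calc ∑ y ∈ Y, (∑ x ∈ y, g x) ^ 2 = ∑ y ∈ Y, ∑ z ∈ y ×ˢ y, g z.1 * g z.2 := by
        simp only [sq, sum_mul_sum, sum_product]
    _ = ∑ z : X × X, (if z.1 = z.2 then (k : R) else l) * (g z.1 * g z.2) := by
        refine (sum_sum_eq_sum_card_filter_nsmul Y (fun y => y ×ˢ y) (fun y _ => subset_univ _)
          (fun z => g z.1 * g z.2)).trans ?_
        simp only [hcount, nsmul_eq_mul, apply_ite (Nat.cast : ℕ → R)]
    _ = ∑ x, ∑ x', ((l : R) * (g x * g x') + if x = x' then (k - l) * (g x * g x') else 0) := by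
        rw [Fintype.sum_prod_type]
        refine sum_congr rfl fun x _ => sum_congr rfl fun x' _ => ?_
        split_ifs <;> ring
    _ = (k - l) * ∑ x, g x ^ 2 + l * (∑ x, g x) ^ 2 := by
        simp only [sum_add_distrib, sum_ite_eq, mem_univ, if_true, ← mul_sum, sq, sum_mul_sum]
        ring

theorem card_mul_eq_card_mul (hc : ∀ y ∈ Y, #y = c) (hk : ∀ x : X, #{y ∈ Y | x ∈ y} = k) :
    #Y * c = Fintype.card X * k :=
  (sum_const_nat hc).symm.trans (sum_card hk)

theorem mul_sub_one_eq_mul_card_sub_one (R : Type*) [CommRing R] [IsDomain R] [CharZero R]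
    [Nonempty X] (hc : ∀ y ∈ Y, #y = c) (hk : ∀ x : X, #{y ∈ Y | x ∈ y} = k)
    (hl : ∀ x x' : X, x ≠ x' → #{y ∈ Y | x ∈ y ∧ x' ∈ y} = l) :
    (k : R) * (c - 1) = l * (Fintype.card X - 1) := by
  have hcard : (#Y : R) * c = Fintype.card X * k := by exact_mod_cast card_mul_eq_card_mul hc hk
  have hsq := sum_sq_sum_block_eq hk hl (fun _ => (1 : R))
  simp only [sum_const, card_univ, nsmul_eq_mul, mul_one, one_pow] at hsq
  rw [sum_congr rfl fun y hy => by rw [hc y hy], sum_const, nsmul_eq_mul] at hsq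
  have hn : (Fintype.card X : R) ≠ 0 := Nat.cast_ne_zero.2 Fintype.card_ne_zero
  refine mul_left_cancel₀ hn ?_
  linear_combination hsq - c * hcard

theorem card_mul_sub_eq_sq_mul (hc : ∀ y ∈ Y, #y = c) (hk : ∀ x : X, #{y ∈ Y | x ∈ y} = k)
    (hl : ∀ x x' : X, x ≠ x' → #{y ∈ Y | x ∈ y ∧ x' ∈ y} = l)
    (hX : 1 < Fintype.card X) :
    (#Y : ℝ) * (k - l) =
      k ^ 2 * (Fintype.card X * (Fintype.card X - c) / (c * (Fintype.card X - 1))) := by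
  have : Nonempty X := Fintype.card_pos_iff.1 (by omega)
  have hcard : (#Y : ℝ) * c = Fintype.card X * k := by exact_mod_cast card_mul_eq_card_mul hc hk
  have hpair := mul_sub_one_eq_mul_card_sub_one ℝ hc hk hl
  have hn : (Fintype.card X : ℝ) ≠ 0 := Nat.cast_ne_zero.2 Fintype.card_ne_zero
  have hn1 : (Fintype.card X : ℝ) - 1 ≠ 0 := sub_ne_zero.2 (by exact_mod_cast hX.ne')
  rcases eq_or_ne c 0 with rfl | hc0
  · have hk0 : (k : ℝ) = 0 := by simpa [hn] using hcard.symm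
    have hl0 : (l : ℝ) = 0 := by simpa [hk0, hn1] using hpair.symm
    simp [hk0, hl0]
  · have hc0' : (c : ℝ) ≠ 0 := Nat.cast_ne_zero.2 hc0
    field_simp
    linear_combination (k - l) * (Fintype.card X - 1) * hcard + Fintype.card X * k * hpair

theorem sum_sq_sum_block_sub_eq (hc : ∀ y ∈ Y, #y = c) (hk : ∀ x : X, #{y ∈ Y | x ∈ y} = k)
    (hl : ∀ x x' : X, x ≠ x' → #{y ∈ Y | x ∈ y ∧ x' ∈ y} = l)
    {f : X → ℝ} (hf : ∑ x, f x = 1) :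
    ∑ y ∈ Y, (∑ x ∈ y, f x - c / Fintype.card X) ^ 2 =
      (k - l) * ∑ x, (f x - 1 / Fintype.card X) ^ 2 := by
  have hn : (Fintype.card X : ℝ) ≠ 0 := by
    have : (univ : Finset X).Nonempty := nonempty_of_sum_ne_zero (by rw [hf]; exact one_ne_zero)
    exact_mod_cast this.card_pos.ne'
  have hblock : ∀ y ∈ Y, ∑ x ∈ y, f x - c / Fintype.card X =
      ∑ x ∈ y, (f x - 1 / Fintype.card X) := fun y hy => by
    rw [sum_sub_distrib, sum_const, hc y hy, nsmul_eq_mul, mul_one_div]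
  have hcenter : ∑ x, (f x - 1 / Fintype.card X) = 0 := by
    rw [sum_sub_distrib, hf, sum_const, card_univ, nsmul_eq_mul, mul_one_div_cancel hn, sub_self]
  rw [sum_congr rfl fun y hy => by rw [hblock y hy], sum_sq_sum_block_eq hk hl, hcenter]
  ring

theorem card_parts_eq [Nonempty X] {parts : Finset (Finset (Finset X))}
    (hk : ∀ x : X, #{y ∈ Y | x ∈ y} = k) (hsub : ∀ p ∈ parts, ∀ y ∈ p, y ∈ Y)
    (hYpart : ∀ y ∈ Y, ∃! p, p ∈ parts ∧ y ∈ p)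
    (hXpart : ∀ p ∈ parts, ∀ x : X, ∃! y, y ∈ p ∧ x ∈ y) : #parts = k := by
  have hpart : ∀ p ∈ parts, ∑ y ∈ p, #y = Fintype.card X * 1 := fun p hp =>
    sum_card fun x => card_filter_eq_one_of_existsUnique (hXpart p hp x)
  have h := sum_sum_eq_sum_of_existsUnique_mem hsub hYpart (fun y => #y)
  rw [sum_congr rfl hpart, sum_const, sum_card hk, smul_eq_mul, mul_one, mul_comm] at h
  exact Nat.eq_of_mul_eq_mul_left Fintype.card_pos h

end BlockDesign

theorem projection_base_random_partition_nearly_uniform_general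
    {X : Type*} [Fintype X] [DecidableEq X]
    (Y : Finset (Finset X)) (n c k l : ℕ)
    (hn : Fintype.card X = n) (hn2 : 2 ≤ n)
    (hc : ∀ y ∈ Y, y.card = c)
    (hk : ∀ x : X, (Y.filter (fun y => x ∈ y)).card = k)
    (hl : ∀ x x' : X, x ≠ x' →
      (Y.filter (fun y => x ∈ y ∧ x' ∈ y)).card = l)
    (parts : Finset (Finset (Finset X))) (hparts : parts.Nonempty)
    (hsub : ∀ p ∈ parts, ∀ y ∈ p, y ∈ Y)
    (hYpart : ∀ y ∈ Y, ∃! p, p ∈ parts ∧ y ∈ p)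
    (hXpart : ∀ p ∈ parts, ∀ x : X, ∃! y, y ∈ p ∧ x ∈ y)
    (f : X → ℝ) (hf1 : ∑ x : X, f x = 1)
    (ε : ℝ) (hε : 0 < ε) :
    1 - (1 / ε) * Real.sqrt
        (((n : ℝ) * ((n : ℝ) - c) / (c * ((n : ℝ) - 1))) *
          ∑ x : X, (f x - 1 / (n : ℝ)) ^ 2)
      ≤ ((parts.filter (fun p =>
            ∑ y ∈ p, |(∑ x ∈ y, f x) - (c : ℝ) / n| ≤ ε)).card : ℝ)
          / (parts.card : ℝ) := by
  subst hn
  have : Nonempty X := Fintype.card_pos_iff.1 (by omega)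
  have hj : #parts = k := card_parts_eq hk hsub hYpart hXpart
  set N : ℝ := (Fintype.card X : ℝ)
  set Q := N * (N - c) / (c * (N - 1)) * ∑ x, (f x - 1 / N) ^ 2
  have hbound : ∑ p ∈ parts, ∑ y ∈ p, |∑ x ∈ y, f x - c / N| ≤ #parts * √Q :=
    calc ∑ p ∈ parts, ∑ y ∈ p, |∑ x ∈ y, f x - c / N|
        = ∑ y ∈ Y, |∑ x ∈ y, f x - c / N| := sum_sum_eq_sum_of_existsUnique_mem hsub hYpart _
      _ ≤ √(#Y * ∑ y ∈ Y, (∑ x ∈ y, f x - c / N) ^ 2) :=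
          Real.sum_abs_le_sqrt_card_mul_sum_sq _ _
      _ = √((#parts : ℝ) ^ 2 * Q) := by
          rw [sum_sq_sum_block_sub_eq hc hk hl hf1, ← mul_assoc,
            card_mul_sub_eq_sq_mul hc hk hl hn2, hj, mul_assoc]
      _ = #parts * √Q := by rw [Real.sqrt_mul (sq_nonneg _), Real.sqrt_sq (Nat.cast_nonneg _)]
  refine le_trans ?_ (one_sub_sum_div_card_div_le_card_filter_le_div hparts
    (fun p _ => sum_nonneg fun y _ => abs_nonneg _) hε)
  have hj0 : (0 : ℝ) < #parts := by exact_mod_cast hparts.card_pos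
  rw [one_div_mul_eq_div]
  gcongr
  rwa [div_le_iff₀ hj0, mul_comm]

/-- **Theorem 4.6: most partitions of a projection base give nearly uniform
projections.**  Let `Y` be a block design on `X` with parameters `(n, c, k, l)`
which is also a projection base: `Y` is partitioned into classes
`p_1, …, p_j` (the elements of `parts`), each of which is a partition of `X`.
Let `f` be a probability on `X`.  If a partition `p` is chosen uniformly at
random among `p_1, …, p_j`, then for every `ε > 0` the event
`Σ_{y ∈ p} |f̄(y) − c/n| ≤ ε` has probability at least
`1 − (1/ε)·( (n(n−c)/(c(n−1))) · Σ_{x ∈ X} (f(x) − 1/n)² )^{1/2}`. -/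
theorem projection_base_random_partition_nearly_uniform
    {X : Type*} [Fintype X] [DecidableEq X]
    (Y : Finset (Finset X)) (n c k l : ℕ)
    (hn : Fintype.card X = n) (hn2 : 2 ≤ n)
    (hc : ∀ y ∈ Y, y.card = c)
    (hk : ∀ x : X, (Y.filter (fun y => x ∈ y)).card = k)
    (hl : ∀ x x' : X, x ≠ x' →
      (Y.filter (fun y => x ∈ y ∧ x' ∈ y)).card = l)
    (parts : Finset (Finset (Finset X))) (hparts : parts.Nonempty)
    (hsub : ∀ p ∈ parts, ∀ y ∈ p, y ∈ Y)
    (hYpart : ∀ y ∈ Y, ∃! p, p ∈ parts ∧ y ∈ p)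
    (hXpart : ∀ p ∈ parts, ∀ x : X, ∃! y, y ∈ p ∧ x ∈ y)
    (f : X → ℝ) (hf0 : ∀ x, 0 ≤ f x) (hf1 : ∑ x : X, f x = 1)
    (ε : ℝ) (hε : 0 < ε) :
    1 - (1 / ε) * Real.sqrt
        (((n : ℝ) * ((n : ℝ) - c) / (c * ((n : ℝ) - 1))) *
          ∑ x : X, (f x - 1 / (n : ℝ)) ^ 2)
      ≤ ((parts.filter (fun p =>
            ∑ y ∈ p, |(∑ x ∈ y, f x) - (c : ℝ) / n| ≤ ε)).card : ℝ)
          / (parts.card : ℝ) :=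
  projection_base_random_partition_nearly_uniform_general Y n c k l hn hn2 hc hk hl parts hparts
    hsub hYpart hXpart f hf1 ε hε
end

section
/- Let f be chosen uniformly at random from the 2n-simplex, and over all subsets y of {1, …, 2n} of cardinality n let (y, y^c) maximize |f̄(y) − 1/2| + |f̄(y^c) − 1/2|. Then as n → ∞, this maximum discrepancy converges in probability to log 2 (natural logarithm). -/
/-!
Writing the weights as `X i / ∑ j, X j`, the discrepancy of a split `(y, yᶜ)` into halves is
`|∑_{y} X - ∑_{yᶜ} X| / ∑ X`. Both halves have `n` elements, so the two sums may be centred at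
any `c`, which bounds the discrepancy by `∑ |X i - c| / ∑ X`. If at least `n` of the `X i`
exceed `c₁ ≤ c` and at most `n` exceed `c₂ ≥ c`, some split has every value above `c₂` in `y`
and every value at most `c₁` in `yᶜ`, and it attains this bound up to `2n (c₂ - c₁) / ∑ X`.
For `c = log 2`, the median of the exponential law, the strong law of large numbers makes these
counts straddle `n` for every `c₁ < log 2 < c₂`, and sends the bound to
`E |X - log 2| / E X = log 2`. Hence the maximal discrepancy converges to `log 2` almost surely,
and a fortiori in probability.
-/

open MeasureTheory ProbabilityTheory Filter Finset Topology Real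

lemma abs_div_add_sub_half_add_abs_div_add_sub_half {a b : ℝ} (h : a + b ≠ 0) :
    |a / (a + b) - 1 / 2| + |b / (a + b) - 1 / 2| = |a - b| / |a + b| := by
  have ha : a / (a + b) - 1 / 2 = (a - b) / (2 * (a + b)) := by field_simp; ring
  have hb : b / (a + b) - 1 / 2 = -((a - b) / (2 * (a + b))) := by field_simp; ring
  rw [ha, hb, abs_neg, abs_div, abs_mul, abs_two]
  ring

lemma sub_mul_div_eq_div_sub_div_div {p q N : ℝ} (k : ℝ) (hN : N ≠ 0) :
    (p - N * k) / q = (p / N - k) / (q / N) := by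
  rcases eq_or_ne q 0 with rfl | hq
  · simp
  · field_simp

section BalancedSplit

variable {ι : Type*} [DecidableEq ι] {s y : Finset ι} (x : ι → ℝ)

lemma abs_sum_sub_sum_sdiff_le_sum_abs_sub (hy : y ⊆ s) (hcard : #(s \ y) = #y) (c : ℝ) :
    |∑ i ∈ y, x i - ∑ i ∈ s \ y, x i| ≤ ∑ i ∈ s, |x i - c| := by
  have hshift : ∑ i ∈ y, x i - ∑ i ∈ s \ y, x i
      = ∑ i ∈ y, (x i - c) - ∑ i ∈ s \ y, (x i - c) := by
    simp only [sum_sub_distrib, sum_const, hcard]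
    ring
  rw [hshift, ← sum_sdiff hy (f := fun i => |x i - c|), add_comm]
  calc _ ≤ |∑ i ∈ y, (x i - c)| + |∑ i ∈ s \ y, (x i - c)| := abs_sub _ _
    _ ≤ _ := by gcongr <;> exact abs_sum_le_sum_abs _ _

lemma exists_sum_abs_sub_sub_le_sum_sub_sum_sdiff {n : ℕ} (hs : #s = 2 * n) {c₁ c c₂ : ℝ}
    (hc₁ : c₁ ≤ c) (hc₂ : c ≤ c₂) (h₁ : n ≤ #{i ∈ s | c₁ < x i})
    (h₂ : #{i ∈ s | c₂ < x i} ≤ n) :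
    ∃ y ⊆ s, #y = n ∧
      ∑ i ∈ s, |x i - c| - 2 * n * (c₂ - c₁) ≤ ∑ i ∈ y, x i - ∑ i ∈ s \ y, x i := by
  have hsub : {i ∈ s | c₂ < x i} ⊆ {i ∈ s | c₁ < x i} :=
    monotone_filter_right s fun _ _ h => hc₁.trans_lt (hc₂.trans_lt h)
  obtain ⟨y, hy₂, hy₁, hcard⟩ := exists_subsuperset_card_eq hsub h₂ h₁
  have hys : y ⊆ s := hy₁.trans (filter_subset _ _)
  have hcard' : #(s \ y) = n := by rw [card_sdiff_of_subset hys]; omega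
  refine ⟨y, hys, hcard, ?_⟩
  have hin : ∑ i ∈ y, |x i - c| ≤ ∑ i ∈ y, ((x i - c) + 2 * (c - c₁)) :=
    sum_le_sum fun i hi => by
      have : c₁ < x i := (mem_filter.1 (hy₁ hi)).2
      exact abs_le.2 ⟨by linarith, by linarith⟩
  have hout : ∑ i ∈ s \ y, |x i - c| ≤ ∑ i ∈ s \ y, ((c - x i) + 2 * (c₂ - c)) :=
    sum_le_sum fun i hi => by
      obtain ⟨his, hiy⟩ := mem_sdiff.1 hi
      have : x i ≤ c₂ := not_lt.1 fun h => hiy (hy₂ (mem_filter.2 ⟨his, h⟩))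
      exact abs_le.2 ⟨by linarith, by linarith⟩
  rw [← sum_sdiff hys]
  simp only [sum_add_distrib, sum_sub_distrib, sum_const, hcard, hcard', nsmul_eq_mul] at hin hout
  linarith

end BalancedSplit

section HalfSplitDiscrepancy

variable (x : ℕ → ℝ) (n : ℕ)

noncomputable def splitDiscrepancy (y : Finset ℕ) : ℝ :=
  |(∑ i ∈ y, x i / ∑ j ∈ range (2 * n), x j) - 1 / 2|
    + |(∑ i ∈ range (2 * n) \ y, x i / ∑ j ∈ range (2 * n), x j) - 1 / 2|

noncomputable def halfSplitDiscrepancy : ℝ :=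
  sSup {d | ∃ y : Finset ℕ, y ⊆ range (2 * n) ∧ #y = n ∧ d = splitDiscrepancy x n y}

lemma powersetCard_range_two_mul_nonempty : (powersetCard n (range (2 * n))).Nonempty :=
  powersetCard_nonempty.2 (by rw [card_range]; omega)

lemma halfSplitDiscrepancy_eq_sup' :
    halfSplitDiscrepancy x n = (powersetCard n (range (2 * n))).sup'
      (powersetCard_range_two_mul_nonempty n) (splitDiscrepancy x n) := by
  rw [sup'_eq_csSup_image, halfSplitDiscrepancy]
  congr 1 with d
  simp [mem_powersetCard, eq_comm, and_assoc]

lemma measurable_halfSplitDiscrepancy {Ω : Type*} [MeasurableSpace Ω] {X : ℕ → Ω → ℝ}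
    (hX : ∀ i, Measurable (X i)) : Measurable fun ω => halfSplitDiscrepancy (X · ω) n := by
  have hsup : (fun ω => halfSplitDiscrepancy (X · ω) n) = (powersetCard n (range (2 * n))).sup'
      (powersetCard_range_two_mul_nonempty n) fun y ω => splitDiscrepancy (X · ω) n y := by
    ext ω
    rw [Finset.sup'_apply, halfSplitDiscrepancy_eq_sup']
  rw [hsup]
  exact measurable_sup' _ fun y _ => by unfold splitDiscrepancy; fun_prop

variable {x n}

lemma splitDiscrepancy_eq {y : Finset ℕ} (hy : y ⊆ range (2 * n))
    (hT : ∑ j ∈ range (2 * n), x j ≠ 0) :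
    splitDiscrepancy x n y
      = |∑ i ∈ y, x i - ∑ i ∈ range (2 * n) \ y, x i| / |∑ j ∈ range (2 * n), x j| := by
  rw [← sum_sdiff hy, add_comm] at hT ⊢
  rw [splitDiscrepancy, ← sum_div, ← sum_div, ← sum_sdiff hy,
    add_comm (∑ i ∈ range (2 * n) \ y, x i), abs_div_add_sub_half_add_abs_div_add_sub_half hT]

lemma halfSplitDiscrepancy_le (hT : 0 < ∑ j ∈ range (2 * n), x j) (c : ℝ) :
    halfSplitDiscrepancy x n
      ≤ (∑ i ∈ range (2 * n), |x i - c|) / ∑ j ∈ range (2 * n), x j := by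
  rw [halfSplitDiscrepancy_eq_sup', sup'_le_iff]
  intro y hy
  obtain ⟨hy, hcard⟩ := mem_powersetCard.1 hy
  have hcard' : #(range (2 * n) \ y) = #y := by
    rw [card_sdiff_of_subset hy, card_range, hcard]; omega
  rw [splitDiscrepancy_eq hy hT.ne', abs_of_pos hT]
  gcongr
  exact abs_sum_sub_sum_sdiff_le_sum_abs_sub x hy hcard' c

lemma le_halfSplitDiscrepancy (hT : 0 < ∑ j ∈ range (2 * n), x j) {c₁ c c₂ : ℝ}
    (hc₁ : c₁ ≤ c) (hc₂ : c ≤ c₂) (h₁ : n ≤ #{i ∈ range (2 * n) | c₁ < x i})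
    (h₂ : #{i ∈ range (2 * n) | c₂ < x i} ≤ n) :
    (∑ i ∈ range (2 * n), |x i - c| - 2 * n * (c₂ - c₁)) / ∑ j ∈ range (2 * n), x j
      ≤ halfSplitDiscrepancy x n := by
  obtain ⟨y, hy, hcard, hle⟩ :=
    exists_sum_abs_sub_sub_le_sum_sub_sum_sdiff x (card_range _) hc₁ hc₂ h₁ h₂
  rw [halfSplitDiscrepancy_eq_sup']
  refine le_trans ?_ (le_sup' _ (mem_powersetCard.2 ⟨hy, hcard⟩))
  rw [splitDiscrepancy_eq hy hT.ne', abs_of_pos hT]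
  gcongr
  exact hle.trans (le_abs_self _)

theorem tendsto_halfSplitDiscrepancy {m a c : ℝ} (hm : 0 < m)
    (hmean : Tendsto (fun n => (∑ i ∈ range n, x i) / n) atTop (𝓝 m))
    (habs : Tendsto (fun n => (∑ i ∈ range n, |x i - c|) / n) atTop (𝓝 a))
    (hlow : ∀ c₁ < c, ∀ᶠ n in atTop, n ≤ #{i ∈ range (2 * n) | c₁ < x i})
    (hup : ∀ c₂ > c, ∀ᶠ n in atTop, #{i ∈ range (2 * n) | c₂ < x i} ≤ n) :
    Tendsto (halfSplitDiscrepancy x) atTop (𝓝 (a / m)) := by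
  have h2n : Tendsto (fun n : ℕ => 2 * n) atTop atTop := tendsto_id.const_mul_atTop' two_pos
  have hA : Tendsto (fun n : ℕ => (∑ i ∈ range (2 * n), |x i - c|) / (2 * n)) atTop (𝓝 a) := by
    simpa [Function.comp_def] using habs.comp h2n
  have hT : Tendsto (fun n : ℕ => (∑ i ∈ range (2 * n), x i) / (2 * n)) atTop (𝓝 m) := by
    simpa [Function.comp_def] using hmean.comp h2n
  have hpos : ∀ᶠ n : ℕ in atTop, 0 < ∑ j ∈ range (2 * n), x j := by
    filter_upwards [hT.eventually (lt_mem_nhds hm), eventually_ge_atTop 1] with n hn hn₁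
    exact (div_pos_iff_of_pos_right (by positivity)).1 hn
  have hnorm : ∀ᶠ n : ℕ in atTop, ∀ k : ℝ,
      (∑ i ∈ range (2 * n), |x i - c| - 2 * n * k) / ∑ j ∈ range (2 * n), x j
        = ((∑ i ∈ range (2 * n), |x i - c|) / (2 * n) - k) /
          ((∑ i ∈ range (2 * n), x i) / (2 * n)) := by
    filter_upwards [eventually_ge_atTop 1] with n hn k
    exact sub_mul_div_eq_div_sub_div_div k (by positivity)
  refine tendsto_order.2 ⟨fun b hb => ?_, fun b hb => ?_⟩
  · have hbm : b * m < a := (lt_div_iff₀ hm).1 hb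
    set η := (a - b * m) / 4
    have hη : 0 < η := by simp only [η]; linarith
    have hlim : b < (a - (c + η - (c - η))) / m := by
      rw [lt_div_iff₀ hm]; simp only [η]; linarith
    filter_upwards [((hA.sub_const _).div hT hm.ne').eventually (lt_mem_nhds hlim),
      hlow (c - η) (by linarith), hup (c + η) (by linarith), hpos, hnorm]
      with n hb' h₁ h₂ hn hk
    rw [Pi.div_apply, ← hk] at hb'
    exact hb'.trans_le (le_halfSplitDiscrepancy hn (by linarith) (by linarith) h₁ h₂)
  · filter_upwards [(hA.div hT hm.ne').eventually (gt_mem_nhds hb), hpos, hnorm]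
      with n hb' hn hk
    rw [Pi.div_apply, ← sub_zero (_ / (2 * (n : ℝ))), ← hk, mul_zero, sub_zero] at hb'
    exact (halfSplitDiscrepancy_le hn c).trans_lt hb'

end HalfSplitDiscrepancy

lemma Filter.Tendsto.eventually_le_comp_two_mul {N : ℕ → ℕ} {p : ℝ}
    (h : Tendsto (fun n => (N n : ℝ) / n) atTop (𝓝 p)) (hp : 1 / 2 < p) :
    ∀ᶠ n in atTop, n ≤ N (2 * n) := by
  filter_upwards [(h.comp (tendsto_id.const_mul_atTop' two_pos)).eventually (lt_mem_nhds hp),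
    eventually_ge_atTop 1] with n hn hn₁
  rw [Function.comp_apply, lt_div_iff₀ (by positivity)] at hn
  push_cast [id_eq] at hn
  exact_mod_cast (by linarith : (n : ℝ) ≤ N (2 * n))

lemma Filter.Tendsto.eventually_comp_two_mul_le {N : ℕ → ℕ} {p : ℝ}
    (h : Tendsto (fun n => (N n : ℝ) / n) atTop (𝓝 p)) (hp : p < 1 / 2) :
    ∀ᶠ n in atTop, N (2 * n) ≤ n := by
  filter_upwards [(h.comp (tendsto_id.const_mul_atTop' two_pos)).eventually (gt_mem_nhds hp),
    eventually_ge_atTop 1] with n hn hn₁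
  rw [Function.comp_apply, div_lt_iff₀ (by positivity)] at hn
  push_cast [id_eq] at hn
  exact_mod_cast (by linarith : (N (2 * n) : ℝ) ≤ n)

section IID

variable {Ω : Type*} [MeasurableSpace Ω] {P : Measure Ω} {X : ℕ → Ω → ℝ} {μ : Measure ℝ}

lemma ae_tendsto_average_comp (hmeas : ∀ i, Measurable (X i))
    (hdist : ∀ i, Measure.map (X i) P = μ) (hindep : iIndepFun X P) {h : ℝ → ℝ}
    (hh : Measurable h) (hint : Integrable h μ) :
    ∀ᵐ ω ∂P, Tendsto (fun n : ℕ => (∑ i ∈ range n, h (X i ω)) / n) atTop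
      (𝓝 (∫ x, h x ∂μ)) := by
  have hh' : AEStronglyMeasurable h (Measure.map (X 0) P) := by rw [hdist 0]; exact hint.1
  have hident : ∀ i, IdentDistrib (X i) (X 0) P P := fun i =>
    ⟨(hmeas i).aemeasurable, (hmeas 0).aemeasurable, by rw [hdist i, hdist 0]⟩
  have hint₀ : Integrable (fun ω => h (X 0 ω)) P := by
    refine (integrable_map_measure hh' (hmeas 0).aemeasurable).1 ?_
    rwa [hdist 0]
  have hlaw := strong_law_ae_real (fun i ω => h (X i ω)) hint₀
    (fun i j hij => (hindep.indepFun hij).comp hh hh) fun i => (hident i).comp hh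
  rwa [← integral_map (hmeas 0).aemeasurable hh', hdist 0] at hlaw

lemma ae_tendsto_card_filter_lt_div [IsFiniteMeasure μ] (hmeas : ∀ i, Measurable (X i))
    (hdist : ∀ i, Measure.map (X i) P = μ) (hindep : iIndepFun X P) (a : ℝ) :
    ∀ᵐ ω ∂P, Tendsto (fun n : ℕ => (#{i ∈ range n | a < X i ω} : ℝ) / n) atTop
      (𝓝 (μ.real (Set.Ioi a))) := by
  have h := ae_tendsto_average_comp hmeas hdist hindep (h := (Set.Ioi a).indicator 1)
    (measurable_one.indicator measurableSet_Ioi) ((integrable_const 1).indicator measurableSet_Ioi)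
  rw [integral_indicator_one measurableSet_Ioi] at h
  simpa [Set.indicator_apply, sum_boole] using h

theorem ae_tendsto_halfSplitDiscrepancy [IsFiniteMeasure μ] (hmeas : ∀ i, Measurable (X i))
    (hdist : ∀ i, Measure.map (X i) P = μ) (hindep : iIndepFun X P) {c : ℝ}
    (hint : Integrable (fun x => x) μ) (hmean : 0 < ∫ x, x ∂μ)
    (hlow : ∀ c₁ < c, 1 / 2 < μ.real (Set.Ioi c₁))
    (hup : ∀ c₂ > c, μ.real (Set.Ioi c₂) < 1 / 2) :
    ∀ᵐ ω ∂P, Tendsto (fun n => halfSplitDiscrepancy (X · ω) n) atTop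
      (𝓝 ((∫ x, |x - c| ∂μ) / ∫ x, x ∂μ)) := by
  -- Rational thresholds suffice, since the counts are monotone in the threshold.
  have hcount := ae_all_iff.2 fun q : ℚ => ae_tendsto_card_filter_lt_div hmeas hdist hindep q
  filter_upwards [ae_tendsto_average_comp hmeas hdist hindep measurable_id hint,
    ae_tendsto_average_comp hmeas hdist hindep (by fun_prop) (hint.sub (integrable_const c)).abs,
    hcount] with ω hmean_ω habs_ω hcount_ω
  refine tendsto_halfSplitDiscrepancy hmean hmean_ω habs_ω (fun c₁ hc₁ => ?_) (fun c₂ hc₂ => ?_)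
  · obtain ⟨q, hc₁q, hqc⟩ := exists_rat_btwn hc₁
    filter_upwards [(hcount_ω q).eventually_le_comp_two_mul (hlow q hqc)] with n hn
    exact hn.trans (card_le_card (monotone_filter_right _ fun _ _ h => hc₁q.trans h))
  · obtain ⟨q, hcq, hqc₂⟩ := exists_rat_btwn hc₂
    filter_upwards [(hcount_ω q).eventually_comp_two_mul_le (hup q hcq)] with n hn
    exact (card_le_card (monotone_filter_right _ fun _ _ h => hqc₂.trans h)).trans hn

end IID

section ExponentialLaw

instance isProbabilityMeasure_expMeasure_one : IsProbabilityMeasure (expMeasure 1) :=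
  isProbabilityMeasure_expMeasure one_pos

lemma integral_expMeasure_one (f : ℝ → ℝ) :
    ∫ x, f x ∂expMeasure 1 = ∫ x in Set.Ioi 0, exp (-x) * f x := by
  rw [expMeasure, gammaMeasure, integral_withDensity_eq_integral_toReal_smul (f := gammaPDF 1 1)
      (measurable_gammaPDFReal 1 1).ennreal_ofReal (ae_of_all _ fun _ => ENNReal.ofReal_lt_top),
    ← integral_Ici_eq_integral_Ioi, ← integral_indicator measurableSet_Ici]
  congr 1 with x
  by_cases hx : 0 ≤ x <;> simp [gammaPDF, gammaPDFReal, hx, (exp_pos _).le]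

lemma integral_id_expMeasure_one : ∫ x, x ∂expMeasure 1 = 1 := by
  have hΓ := Real.Gamma_eq_integral (s := 2) two_pos
  rw [Real.Gamma_two] at hΓ
  rw [integral_expMeasure_one, hΓ]
  norm_num

-- The Bochner integral of a non-integrable function is `0`.
lemma integrable_id_expMeasure_one : Integrable (fun x => x) (expMeasure 1) :=
  Integrable.of_integral_ne_zero (by simp [integral_id_expMeasure_one])

lemma integral_max_sub_zero_expMeasure_one {c : ℝ} (hc : 0 ≤ c) :
    ∫ x, max (c - x) 0 ∂expMeasure 1 = exp (-c) - 1 + c := by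
  have hderiv : ∀ x, HasDerivAt (fun x => (x - c + 1) * exp (-x)) (exp (-x) * (c - x)) x :=
    fun x => ((((hasDerivAt_id' x).sub_const c).add_const 1).mul
      (hasDerivAt_neg x).exp).congr_deriv (by ring)
  have hIoc : ∀ x ∈ Set.Ioi 0 \ Set.Ioc 0 c, exp (-x) * max (c - x) 0 = 0 := fun x hx => by
    simp only [Set.mem_sdiff, Set.mem_Ioi, Set.mem_Ioc, not_and, not_le] at hx
    simp [(hx.2 hx.1).le]
  rw [integral_expMeasure_one, setIntegral_eq_of_subset_of_forall_sdiff_eq_zero measurableSet_Ioi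
      Set.Ioc_subset_Ioi_self hIoc, ← intervalIntegral.integral_of_le hc,
    intervalIntegral.integral_congr (g := fun x => exp (-x) * (c - x)) fun x hx => by
      rw [Set.uIcc_of_le hc] at hx; simp [hx.2],
    intervalIntegral.integral_eq_sub_of_hasDerivAt (fun x _ => hderiv x)
      ((by fun_prop : Continuous fun x => exp (-x) * (c - x)).intervalIntegrable _ _)]
  simp only [sub_self, zero_add, one_mul, neg_zero, exp_zero, mul_one]
  ring

lemma integral_abs_sub_expMeasure_one {c : ℝ} (hc : 0 ≤ c) :
    ∫ x, |x - c| ∂expMeasure 1 = c - 1 + 2 * exp (-c) := by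
  have hsplit : ∀ x : ℝ, |x - c| = (x - c) + 2 * max (c - x) 0 := fun x => by
    rcases le_total c x with h | h
    · rw [abs_of_nonneg (sub_nonneg.2 h), max_eq_right (sub_nonpos.2 h)]; ring
    · rw [abs_of_nonpos (sub_nonpos.2 h), max_eq_left (sub_nonneg.2 h)]; ring
  have hint := integrable_id_expMeasure_one
  simp_rw [hsplit]
  rw [integral_add (f := fun x => x - c) (g := fun x => 2 * max (c - x) 0)
      (hint.sub (integrable_const c)) (((integrable_const c).sub hint).pos_part.const_mul 2),
    integral_sub hint (integrable_const c), integral_const_mul,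
    integral_max_sub_zero_expMeasure_one hc, integral_id_expMeasure_one, integral_const,
    probReal_univ, one_smul]
  ring

lemma expMeasure_one_real_Ioi (a : ℝ) : (expMeasure 1).real (Set.Ioi a) = exp (-max a 0) := by
  rw [← Set.compl_Iic, probReal_compl_eq_one_sub measurableSet_Iic, ← cdf_eq_real,
    cdf_expMeasure_eq one_pos]
  rcases le_or_gt 0 a with h | h
  · simp [h]
  · simp [h.not_ge, max_eq_right h.le]

theorem ae_tendsto_halfSplitDiscrepancy_log_two {Ω : Type*} [MeasurableSpace Ω] {P : Measure Ω}
    {X : ℕ → Ω → ℝ} (hmeas : ∀ i, Measurable (X i))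
    (hdist : ∀ i, Measure.map (X i) P = expMeasure 1) (hindep : iIndepFun X P) :
    ∀ᵐ ω ∂P, Tendsto (fun n => halfSplitDiscrepancy (X · ω) n) atTop (𝓝 (log 2)) := by
  have hlog : 0 < log 2 := log_pos one_lt_two
  have hhalf : exp (-log 2) = 1 / 2 := by rw [exp_neg, exp_log two_pos, one_div]
  have h := ae_tendsto_halfSplitDiscrepancy hmeas hdist hindep (c := log 2)
    integrable_id_expMeasure_one (by rw [integral_id_expMeasure_one]; exact one_pos)
    (fun c₁ hc₁ => by
      rw [expMeasure_one_real_Ioi, ← hhalf, exp_lt_exp, neg_lt_neg_iff]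
      exact max_lt hc₁ hlog)
    (fun c₂ hc₂ => by
      rw [expMeasure_one_real_Ioi, ← hhalf, exp_lt_exp, neg_lt_neg_iff,
        max_eq_left (hlog.trans hc₂).le]
      exact hc₂)
  rwa [integral_abs_sub_expMeasure_one hlog.le, integral_id_expMeasure_one, hhalf, div_one,
    mul_one_div_cancel two_ne_zero, sub_add_cancel] at h

end ExponentialLaw

/-- **Corollary 5.3: the maximum discrepancy of a half split tends to `log 2`.**
Let `f` be chosen uniformly from the `2n`-simplex, realized as
`f_i = X_i/(X_1+⋯+X_{2n})` for i.i.d. standard exponentials `X_1, X_2, …`.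
Over all subsets `y ⊆ {1, …, 2n}` of cardinality `n`, let `(y, y^c)` maximize
`|f̄(y) − 1/2| + |f̄(y^c) − 1/2|`.  Then as `n → ∞` this maximum discrepancy
converges in probability to `log 2`. -/
theorem max_half_split_discrepancy_tendsto_log_two
    {Ω : Type*} [MeasurableSpace Ω] (P : Measure Ω) [IsProbabilityMeasure P]
    (X : ℕ → Ω → ℝ)
    (hmeas : ∀ i, Measurable (X i))
    (hdist : ∀ i, Measure.map (X i) P = expMeasure 1)
    (hindep : iIndepFun X P) :
    ∀ ε : ℝ, 0 < ε →
      Tendsto (fun n : ℕ =>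
          P {ω |
            |sSup {d : ℝ | ∃ y : Finset ℕ, y ⊆ Finset.range (2 * n) ∧
                y.card = n ∧
                d = |(∑ i ∈ y, X i ω / (∑ j ∈ Finset.range (2 * n), X j ω))
                      - 1 / 2|
                  + |(∑ i ∈ Finset.range (2 * n) \ y,
                        X i ω / (∑ j ∈ Finset.range (2 * n), X j ω)) - 1 / 2|}
              - Real.log 2| > ε})
        atTop (𝓝 0) := by
  intro ε hε
  have hconv := tendstoInMeasure_of_tendsto_ae
    (fun n => (measurable_halfSplitDiscrepancy n hmeas).aestronglyMeasurable)
    (ae_tendsto_halfSplitDiscrepancy_log_two hmeas hdist hindep)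
  refine tendsto_of_tendsto_of_tendsto_of_le_of_le tendsto_const_nhds
    (hconv (ENNReal.ofReal ε) (ENNReal.ofReal_pos.2 hε)) (fun _ => zero_le)
    fun n => measure_mono fun ω hω => ?_
  rw [Set.mem_ofPred_eq, edist_dist, Real.dist_eq]
  exact ENNReal.ofReal_le_ofReal hω.le
end

section
/- Fix λ > 0, let p_λ(j) = e^{−λ}λ^j/j! and P_λ(j) = Σ_{i=0}^j p_λ(i). Let m ≥ 0 be an integer and θ ∈ [0, 1) satisfy P_λ(m) + θ·p_λ(m+1) = 1/2. Then the truncated first moment satisfies the exact identity Σ_{j=0}^m j·p_λ(j) + θ·(m+1)·p_λ(m+1) = λ/2 − λ·(e^{−λ}λ^m/m!)·(1 + θ·(λ/(m+1) − 1)). -/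
open Finset

/-- **Truncated first moment identity for the Poisson distribution.**
Fix `λ > 0`, let `p_λ(j) = e^{−λ}λ^j/j!` and `P_λ(j) = Σ_{i=0}^j p_λ(i)`.
If `m ≥ 0` and `θ ∈ [0,1)` satisfy `P_λ(m) + θ·p_λ(m+1) = 1/2`, then
`Σ_{j=0}^m j·p_λ(j) + θ·(m+1)·p_λ(m+1)
   = λ/2 − λ·(e^{−λ}λ^m/m!)·(1 + θ·(λ/(m+1) − 1))`. -/
theorem poisson_truncated_first_moment (lam : ℝ) (hlam : 0 < lam)
    (m : ℕ) (θ : ℝ) (hθ0 : 0 ≤ θ) (hθ1 : θ < 1)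
    (hhalf : (∑ i ∈ Finset.range (m + 1),
          Real.exp (-lam) * lam ^ i / (Nat.factorial i))
        + θ * (Real.exp (-lam) * lam ^ (m + 1) / (Nat.factorial (m + 1)))
      = 1 / 2) :
    (∑ j ∈ Finset.range (m + 1),
        (j : ℝ) * (Real.exp (-lam) * lam ^ j / (Nat.factorial j)))
      + θ * ((m : ℝ) + 1) *
          (Real.exp (-lam) * lam ^ (m + 1) / (Nat.factorial (m + 1)))
    = lam / 2
      - lam * (Real.exp (-lam) * lam ^ m / (Nat.factorial m)) *
          (1 + θ * (lam / ((m : ℝ) + 1) - 1)) := by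
  have key : ∀ j : ℕ, ((j : ℝ) + 1) *
      (Real.exp (-lam) * lam ^ (j + 1) / (Nat.factorial (j + 1)))
      = lam * (Real.exp (-lam) * lam ^ j / (Nat.factorial j)) := by
    intro j
    have h : ((Nat.factorial (j + 1)) : ℝ) = ((j : ℝ) + 1) * (Nat.factorial j) := by
      push_cast [Nat.factorial_succ]; ring
    have hj : ((j : ℝ) + 1) ≠ 0 := by positivity
    have hf : ((Nat.factorial j : ℝ)) ≠ 0 := by
      exact_mod_cast (Nat.factorial_pos j).ne'
    rw [h]
    field_simp
    ring
  have hsum : (∑ j ∈ Finset.range (m + 1),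
        (j : ℝ) * (Real.exp (-lam) * lam ^ j / (Nat.factorial j)))
      = lam * ∑ j ∈ Finset.range m,
          Real.exp (-lam) * lam ^ j / (Nat.factorial j) := by
    rw [Finset.sum_range_succ']
    simp only [Nat.cast_zero, zero_mul, add_zero]
    rw [Finset.mul_sum]
    refine Finset.sum_congr rfl fun j _ => ?_
    have := key j
    push_cast
    linarith [key j]
  have hP : (∑ j ∈ Finset.range m, Real.exp (-lam) * lam ^ j / (Nat.factorial j))
      = (∑ i ∈ Finset.range (m + 1), Real.exp (-lam) * lam ^ i / (Nat.factorial i))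
        - Real.exp (-lam) * lam ^ m / (Nat.factorial m) := by
    rw [Finset.sum_range_succ]; ring
  rw [hsum, hP]
  have hm : ((m : ℝ) + 1) ≠ 0 := by positivity
  have hp1 : Real.exp (-lam) * lam ^ (m + 1) / (Nat.factorial (m + 1))
      = lam * (Real.exp (-lam) * lam ^ m / (Nat.factorial m)) / ((m : ℝ) + 1) := by
    rw [eq_div_iff hm]
    linarith [key m]
  rw [hp1] at hhalf ⊢
  have hS : (∑ i ∈ Finset.range (m + 1),
      Real.exp (-lam) * lam ^ i / (Nat.factorial i))
      = 1 / 2 - θ * (lam * (Real.exp (-lam) * lam ^ m / (Nat.factorial m)) / ((m : ℝ) + 1)) := by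
    linarith [hhalf]
  rw [hS]
  field_simp
  ring
end
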